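/- Let N ≥ 2 and let χ¹, χ² be the vanishing-order sequences of two nonzero partitions of N. If χ¹_N + χ²_N ≤ N and there exists k ∈ {2,…,N} with χ¹_k + χ²_k > k, then N is even and χ¹_k = χ²_k = ⌈k/2⌉ for all k ∈ {1,…,N}, i.e., both partitions equal [2^{N/2}]. -/

import Mathlib

/-- `p` (with parts indexed from 1) is a partition of `N`: the parts are
nonincreasing, sum to `N`, and vanish beyond index `N`. -/
def IsPartitionOf (N : ℕ) (p : ℕ → ℕ) : Prop :=
  (∀ i, 1 ≤ i → p (i + 1) ≤ p i) ∧
  (∑ j ∈ Finset.Icc 1 N, p j = N) ∧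
  (∀ i, N < i → p i = 0)

/-- The vanishing order at `k` of the partition `p`: the least positive
integer `i` such that `p 1 + ⋯ + p i ≥ k`. -/
noncomputable def chiOf (p : ℕ → ℕ) (k : ℕ) : ℕ :=
  sInf {i | 1 ≤ i ∧ k ≤ ∑ j ∈ Finset.Icc 1 i, p j}

/-- `χ` is the vanishing-order sequence, on `{1,…,N}`, of the partition `p` of `N`. -/
def IsVanishingOrderSeq (N : ℕ) (p : ℕ → ℕ) (χ : ℕ → ℕ) : Prop :=
  IsPartitionOf N p ∧ ∀ k, 1 ≤ k → k ≤ N → χ k = chiOf p k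

/-!
Write `S i = p 1 + ⋯ + p i`, `m = χ_N` (so `S m = N`) and `A = χ_k - 1` (so `S A < k`).
Since the parts decrease, so do the averages `S i / i`, whence `A * N ≤ m * S A ≤ m * (k - 1)`.
As `p 1 ≥ 2` gives `S (k - 1) ≥ k`, both `χ_k ≤ k - 1`; hence `χ¹_k + χ²_k > k` means
`A₁ + A₂ ≥ k - 1`, and together with `m₁ + m₂ ≤ N` the sum of the two inequalities is pinched
into equalities. Equal averages at `0 < A < m` force all nonzero parts to equal `p 1 ≥ 2`, so
`N = m * p 1 ≥ 2 * m` for both partitions, and `m₁ + m₂ = N` leaves only `p 1 = 2`.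
-/

open Finset

def partSum (p : ℕ → ℕ) (i : ℕ) : ℕ := ∑ j ∈ Icc 1 i, p j

section PartialSums

variable {p : ℕ → ℕ}

theorem partSum_zero : partSum p 0 = 0 := by simp [partSum]

theorem monotone_partSum : Monotone (partSum p) :=
  fun _ _ h => sum_le_sum_of_subset (Icc_subset_Icc_right h)

theorem partSum_add (A M : ℕ) :
    partSum p (A + M) = partSum p A + ∑ j ∈ Ioc A (A + M), p j := by
  have hIcc : ∀ i, Icc 1 i = Ioc 0 i := Icc_add_one_left_eq_Ioc 0
  rw [partSum, partSum, hIcc, hIcc,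
    sum_Ioc_consecutive p (Nat.zero_le A) (Nat.le_add_right A M)]

theorem partSum_add_of_forall_eq_zero {A M : ℕ} (h : ∀ j ∈ Ioc A (A + M), p j = 0) :
    partSum p (A + M) = partSum p A := by
  rw [partSum_add, sum_eq_zero h, add_zero]

theorem partSum_of_forall_eq {i c : ℕ} (h : ∀ j ∈ Icc 1 i, p j = c) : partSum p i = i * c := by
  rw [partSum, sum_congr rfl h, sum_const, Nat.card_Icc, smul_eq_mul, Nat.add_sub_cancel]

end PartialSums

section ChiOf

variable {p : ℕ → ℕ} {k n : ℕ}

theorem chiOf_le_iff (hk : 1 ≤ k) (hn : k ≤ partSum p n) {i : ℕ} :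
    chiOf p k ≤ i ↔ k ≤ partSum p i := by
  have hpos : ∀ {i}, k ≤ partSum p i → 1 ≤ i := fun {i} h =>
    Nat.one_le_iff_ne_zero.2 (by rintro rfl; rw [partSum_zero] at h; omega)
  have hmem : chiOf p k ∈ {i | 1 ≤ i ∧ k ≤ partSum p i} := Nat.sInf_mem ⟨n, hpos hn, hn⟩
  exact ⟨fun h => hmem.2.trans (monotone_partSum h), fun h => Nat.sInf_le ⟨hpos h, h⟩⟩

theorem le_partSum_chiOf (hk : 1 ≤ k) (hn : k ≤ partSum p n) : k ≤ partSum p (chiOf p k) :=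
  (chiOf_le_iff hk hn).1 le_rfl

theorem partSum_pred_chiOf_lt (hk : 1 ≤ k) (hn : k ≤ partSum p n) :
    partSum p (chiOf p k - 1) < k := by
  by_contra! h
  have hzero : chiOf p k ≤ 0 := by have := (chiOf_le_iff hk hn).2 h; omega
  have := (chiOf_le_iff hk hn).1 hzero
  rw [partSum_zero] at this
  omega

theorem chiOf_eq_half {m : ℕ} (h : ∀ j ∈ Icc 1 m, p j = 2) (hk : 1 ≤ k) (hkm : k ≤ 2 * m) :
    chiOf p k = (k + 1) / 2 := by
  have hsum : ∀ i ≤ m, partSum p i = i * 2 := fun i hi =>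
    partSum_of_forall_eq fun j hj => h j (Icc_subset_Icc_right hi hj)
  have hkm' : k ≤ partSum p m := by rw [hsum m le_rfl]; omega
  have hle : chiOf p k ≤ (k + 1) / 2 := by
    rw [chiOf_le_iff hk hkm', hsum _ (by omega)]; omega
  have hgt : ¬ chiOf p k ≤ (k + 1) / 2 - 1 := by
    rw [chiOf_le_iff hk hkm', hsum _ (by omega)]; omega
  omega

end ChiOf

section Chord

variable {p : ℕ → ℕ} (hp : AntitoneOn p (Set.Ici 1))
include hp

theorem mul_le_partSum (A : ℕ) : A * p (A + 1) ≤ partSum p A := by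
  simpa [partSum] using card_nsmul_le_sum (Icc 1 A) p (p (A + 1)) fun j hj => by
    simp only [mem_Icc] at hj
    exact hp (Set.mem_Ici.2 hj.1) (Set.mem_Ici.2 (by omega)) (by omega)

theorem sum_Ioc_le_mul (A M : ℕ) : ∑ j ∈ Ioc A (A + M), p j ≤ M * p (A + 1) := by
  simpa using sum_le_card_nsmul (Ioc A (A + M)) p (p (A + 1)) fun j hj => by
    simp only [mem_Ioc] at hj
    exact hp (Set.mem_Ici.2 (by omega)) (Set.mem_Ici.2 (by omega)) (by omega)

theorem mul_partSum_add_le (A M : ℕ) : A * partSum p (A + M) ≤ (A + M) * partSum p A := by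
  have hlow := Nat.mul_le_mul_left M (mul_le_partSum hp A)
  have hupp := Nat.mul_le_mul_left A (sum_Ioc_le_mul hp A M)
  rw [partSum_add]
  nlinarith

theorem eq_of_mul_partSum_add_eq {A M : ℕ} (hA : 0 < A) (hM : 0 < M)
    (heq : A * partSum p (A + M) = (A + M) * partSum p A) :
    ∀ j ∈ Icc 1 (A + M), p j = p 1 := by
  have hlow := mul_le_partSum hp A
  have hupp := sum_Ioc_le_mul hp A M
  rw [partSum_add] at heq
  have hlow_eq : A * p (A + 1) = partSum p A := by nlinarith
  have hupp_eq : ∑ j ∈ Ioc A (A + M), p j = M * p (A + 1) := by nlinarith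
  have hhead : ∀ j ∈ Icc 1 A, p (A + 1) = p j := by
    refine (sum_eq_sum_iff_of_le fun j hj => ?_).1 (by simpa [partSum] using hlow_eq)
    simp only [mem_Icc] at hj
    exact hp (Set.mem_Ici.2 hj.1) (Set.mem_Ici.2 (by omega)) (by omega)
  have htail : ∀ j ∈ Ioc A (A + M), p j = p (A + 1) := by
    refine (sum_eq_sum_iff_of_le fun j hj => ?_).1 (by simpa using hupp_eq)
    simp only [mem_Ioc] at hj
    exact hp (Set.mem_Ici.2 (by omega)) (Set.mem_Ici.2 (by omega)) (by omega)
  have h1 := hhead 1 (by simp; omega)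
  intro j hj
  simp only [mem_Icc] at hj
  rcases le_or_gt j A with h | h
  · rw [← hhead j (mem_Icc.2 ⟨hj.1, h⟩), h1]
  · rw [htail j (mem_Ioc.2 ⟨h, hj.2⟩), h1]

end Chord

namespace IsPartitionOf

variable {N : ℕ} {p : ℕ → ℕ} (hp : IsPartitionOf N p)
include hp

theorem antitoneOn : AntitoneOn p (Set.Ici 1) := antitoneOn_nat_Ici_of_succ_le hp.1

theorem partSum_self : partSum p N = N := hp.2.1

theorem partSum_of_le {i : ℕ} (hi : N ≤ i) : partSum p i = N := by
  obtain ⟨M, rfl⟩ := Nat.exists_eq_add_of_le hi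
  rw [partSum_add_of_forall_eq_zero fun j hj => hp.2.2 j (mem_Ioc.1 hj).1, hp.partSum_self]

theorem partSum_le (i : ℕ) : partSum p i ≤ N :=
  (monotone_partSum (le_max_left i N)).trans (hp.partSum_of_le (le_max_right i N)).le

theorem partSum_eq_of_eq_zero {i : ℕ} (h : p (i + 1) = 0) : partSum p i = N := by
  rw [← hp.partSum_of_le (Nat.le_add_left N i), partSum_add_of_forall_eq_zero fun j hj => ?_]
  simp only [mem_Ioc] at hj
  have := hp.antitoneOn (Set.mem_Ici.2 (by omega)) (Set.mem_Ici.2 (by omega))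
    (by omega : i + 1 ≤ j)
  omega

theorem succ_le_partSum (hp1 : 2 ≤ p 1) {i : ℕ} (hi : 1 ≤ i) (hiN : i < N) :
    i + 1 ≤ partSum p i := by
  induction i, hi using Nat.le_induction with
  | base => simpa [partSum] using hp1
  | succ i hi ih =>
    rw [partSum, sum_Icc_succ_top (by omega), ← partSum]
    by_cases h : p (i + 1) = 0
    · have := hp.partSum_eq_of_eq_zero h
      omega
    · have := ih (by omega)
      omega

theorem chiOf_le_pred (hp1 : 2 ≤ p 1) {k : ℕ} (hk : 2 ≤ k) (hkN : k ≤ N) :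
    chiOf p k ≤ k - 1 :=
  (chiOf_le_iff (by omega) (hkN.trans_eq hp.partSum_self.symm)).2
    (by have := hp.succ_le_partSum hp1 (i := k - 1) (by omega) (by omega); omega)

theorem partSum_chiOf_self (hN : 1 ≤ N) : partSum p (chiOf p N) = N :=
  (hp.partSum_le _).antisymm (le_partSum_chiOf hN hp.partSum_self.ge)

variable {k : ℕ} (hk : 1 ≤ k) (hkN : k ≤ N)
include hk hkN

theorem chiOf_le_chiOf_self : chiOf p k ≤ chiOf p N :=
  (chiOf_le_iff hk (hkN.trans hp.partSum_self.ge)).2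
    ((hp.partSum_chiOf_self (hk.trans hkN)).symm ▸ hkN)

theorem partSum_pred_chiOf_le : partSum p (chiOf p k - 1) ≤ k - 1 := by
  have := partSum_pred_chiOf_lt hk (hkN.trans hp.partSum_self.ge)
  omega

theorem pred_chiOf_mul_le_mul_partSum :
    (chiOf p k - 1) * N ≤ chiOf p N * partSum p (chiOf p k - 1) := by
  obtain ⟨M, hM⟩ :=
    Nat.exists_eq_add_of_le ((Nat.sub_le _ 1).trans (hp.chiOf_le_chiOf_self hk hkN))
  have := mul_partSum_add_le hp.antitoneOn (chiOf p k - 1) M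
  rwa [← hM, hp.partSum_chiOf_self (hk.trans hkN)] at this

theorem pred_chiOf_mul_le : (chiOf p k - 1) * N ≤ chiOf p N * (k - 1) :=
  (hp.pred_chiOf_mul_le_mul_partSum hk hkN).trans
    (Nat.mul_le_mul_left _ (hp.partSum_pred_chiOf_le hk hkN))

theorem eq_of_pred_chiOf_mul_eq (hk2 : 2 ≤ chiOf p k)
    (heq : (chiOf p k - 1) * N = chiOf p N * (k - 1)) :
    ∀ j ∈ Icc 1 (chiOf p N), p j = p 1 := by
  have hle := hp.pred_chiOf_mul_le_mul_partSum hk hkN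
  have hSA := Nat.mul_le_mul_left (chiOf p N) (hp.partSum_pred_chiOf_le hk hkN)
  obtain ⟨M, hM⟩ := Nat.exists_eq_add_of_lt
    ((Nat.sub_lt (by omega) one_pos).trans_le (hp.chiOf_le_chiOf_self hk hkN))
  rw [add_assoc] at hM
  rw [hM]
  refine eq_of_mul_partSum_add_eq hp.antitoneOn (by omega) (Nat.succ_pos M) ?_
  rw [← hM, hp.partSum_chiOf_self (hk.trans hkN)]
  exact le_antisymm hle (hSA.trans heq.ge)

end IsPartitionOf

theorem two_sided_forces_two_blocks_general
    (N : ℕ) (p₁ p₂ χ₁ χ₂ : ℕ → ℕ)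
    (h1 : IsVanishingOrderSeq N p₁ χ₁) (hp1 : 2 ≤ p₁ 1)
    (h2 : IsVanishingOrderSeq N p₂ χ₂) (hp2 : 2 ≤ p₂ 1)
    (hend : χ₁ N + χ₂ N ≤ N)
    (hex : ∃ k, 2 ≤ k ∧ k ≤ N ∧ k < χ₁ k + χ₂ k) :
    Even N ∧ ∀ k, 1 ≤ k → k ≤ N → χ₁ k = (k + 1) / 2 ∧ χ₂ k = (k + 1) / 2 := by
  obtain ⟨hpart₁, hχ₁⟩ := h1
  obtain ⟨hpart₂, hχ₂⟩ := h2
  obtain ⟨k, hk, hkN, hlt⟩ := hex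
  rw [hχ₁ k (by omega) hkN, hχ₂ k (by omega) hkN] at hlt
  rw [hχ₁ N (by omega) le_rfl, hχ₂ N (by omega) le_rfl] at hend
  have hle₁ := hpart₁.chiOf_le_pred hp1 hk hkN
  have hle₂ := hpart₂.chiOf_le_pred hp2 hk hkN
  have key₁ := hpart₁.pred_chiOf_mul_le (by omega) hkN
  have key₂ := hpart₂.pred_chiOf_mul_le (by omega) hkN
  have hsum := Nat.mul_le_mul_right N (show k - 1 ≤ chiOf p₁ k - 1 + (chiOf p₂ k - 1) by omega)
  have hend' := Nat.mul_le_mul_right (k - 1) hend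
  have heq₁ : (chiOf p₁ k - 1) * N = chiOf p₁ N * (k - 1) := by nlinarith
  have heq₂ : (chiOf p₂ k - 1) * N = chiOf p₂ N * (k - 1) := by nlinarith
  have hm : chiOf p₁ N + chiOf p₂ N = N :=
    Nat.eq_of_mul_eq_mul_right (show 0 < k - 1 by omega) (by nlinarith)
  have hc₁ := hpart₁.eq_of_pred_chiOf_mul_eq (by omega) hkN (by omega) heq₁
  have hc₂ := hpart₂.eq_of_pred_chiOf_mul_eq (by omega) hkN (by omega) heq₂
  have hN₁ := partSum_of_forall_eq hc₁
  have hN₂ := partSum_of_forall_eq hc₂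
  rw [hpart₁.partSum_chiOf_self (by omega)] at hN₁
  rw [hpart₂.partSum_chiOf_self (by omega)] at hN₂
  have two₁ : p₁ 1 = 2 := by nlinarith
  have two₂ : p₂ 1 = 2 := by nlinarith
  rw [two₁] at hc₁ hN₁
  rw [two₂] at hc₂ hN₂
  refine ⟨⟨chiOf p₁ N, by omega⟩, fun j hj hjN => ?_⟩
  rw [hχ₁ j hj hjN, hχ₂ j hj hjN]
  exact ⟨chiOf_eq_half hc₁ hj (by omega), chiOf_eq_half hc₂ hj (by omega)⟩

/-- if `χ¹_N + χ²_N ≤ N` but `χ¹_k + χ²_k > k` for some `k ∈ {2,…,N}`,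
then `N` is even and both partitions equal `[2^{N/2}]`, i.e. `χ¹_k = χ²_k = ⌈k/2⌉`. -/
theorem two_sided_forces_two_blocks
    (N : ℕ) (hN : 2 ≤ N) (p₁ p₂ χ₁ χ₂ : ℕ → ℕ)
    (h1 : IsVanishingOrderSeq N p₁ χ₁) (hp1 : 2 ≤ p₁ 1)
    (h2 : IsVanishingOrderSeq N p₂ χ₂) (hp2 : 2 ≤ p₂ 1)
    (hend : χ₁ N + χ₂ N ≤ N)
    (hex : ∃ k, 2 ≤ k ∧ k ≤ N ∧ k < χ₁ k + χ₂ k) :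
    Even N ∧ ∀ k, 1 ≤ k → k ≤ N → χ₁ k = (k + 1) / 2 ∧ χ₂ k = (k + 1) / 2 :=
  two_sided_forces_two_blocks_general N p₁ p₂ χ₁ χ₂ h1 hp1 h2 hp2 hend hex
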